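/- Fix t ≥ 1 and let H_t = {s ∈ ℤ : 0 ≤ s < p_t, 2^t | s, and b_i ∤ s for all 1 ≤ i ≤ t} (the set of holes at level t). If m ∈ ℤ is such that {(s + m) mod p_t : s ∈ H_t} = H_t, then 2^t | m. -/

import Mathlib

/-!
A hole exists: by the Chinese remainder theorem some `0 ≤ s < p_t` is `≡ 0 mod 2^t` and `≡ 1` modulo
`b_1 ⋯ b_t`, and no `b_i > 1` divides it. Every hole is a multiple of `2^t`, so `s` and `(s + m) mod p_t`
both are, and since `2^t ∣ p_t` this forces `2^t ∣ m`.
-/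

open scoped BigOperators

-- `pp b t = 2^t * b_1 * b_2 * \cdots * b_t`. 
def pp (b : ℕ → ℕ) (t : ℕ) : ℕ := 2 ^ t * ∏ i ∈ Finset.Icc 1 t, b i

-- The set of holes at level `t`. 
def Hset (b : ℕ → ℕ) (t : ℕ) : Set ℤ :=
  {s : ℤ | 0 ≤ s ∧ s < (pp b t : ℤ) ∧ (2 : ℤ) ^ t ∣ s ∧
    ∀ i : ℕ, 1 ≤ i → i ≤ t → ¬ ((b i : ℤ) ∣ s)}

open Finset

theorem two_pow_dvd_of_mem_Hset {b : ℕ → ℕ} {t : ℕ} {s : ℤ} (hs : s ∈ Hset b t) :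
    (2 : ℤ) ^ t ∣ s :=
  hs.2.2.1

theorem two_pow_dvd_pp (b : ℕ → ℕ) (t : ℕ) : (2 : ℤ) ^ t ∣ (pp b t : ℤ) :=
  ⟨_, by push_cast [pp]; rfl⟩

theorem Hset_nonempty (b : ℕ → ℕ) (hodd : ∀ i : ℕ, 1 ≤ i → Odd (b i))
    (hgt : ∀ i : ℕ, 1 ≤ i → 1 < b i) (t : ℕ) : (Hset b t).Nonempty := by
  set B := ∏ i ∈ Icc 1 t, b i
  have hB : Nat.Coprime (2 ^ t) B := Nat.Coprime.pow_left _ <|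
    Nat.Coprime.prod_right fun i hi => Nat.coprime_two_left.mpr (hodd i (mem_Icc.mp hi).1)
  have hB0 : B ≠ 0 := prod_ne_zero_iff.mpr fun i hi => (hodd i (mem_Icc.mp hi).1).pos.ne'
  set k : ℕ := (Nat.chineseRemainder hB 0 1 : ℕ)
  have hk0 : k ≡ 0 [MOD 2 ^ t] := (Nat.chineseRemainder hB 0 1).2.1
  have hk1 : k ≡ 1 [MOD B] := (Nat.chineseRemainder hB 0 1).2.2
  have hklt : k < pp b t := Nat.chineseRemainder_lt_mul hB 0 1 (by positivity) hB0
  refine ⟨k, Int.natCast_nonneg k, by exact_mod_cast hklt,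
    by exact_mod_cast Nat.modEq_zero_iff_dvd.mp hk0, fun i hi1 hit hdvd => ?_⟩
  have hbB : b i ∣ B := dvd_prod_of_mem b (mem_Icc.mpr ⟨hi1, hit⟩)
  have hb1 : b i ∣ 1 := (hk1.dvd_iff hbB).mp (Int.natCast_dvd_natCast.mp hdvd)
  exact (hgt i hi1).ne' (Nat.dvd_one.mp hb1)

theorem holes_shift_invariant_two_pow_general (b : ℕ → ℕ)
    (hodd : ∀ i : ℕ, 1 ≤ i → Odd (b i))
    (hgt : ∀ i : ℕ, 1 ≤ i → 1 < b i)
    (t : ℕ) (m : ℤ)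
    (hshift : (fun s => (s + m) % (pp b t : ℤ)) '' Hset b t = Hset b t) :
    (2 : ℤ) ^ t ∣ m := by
  obtain ⟨s, hs⟩ := Hset_nonempty b hodd hgt t
  have hshifted : (s + m) % (pp b t : ℤ) ∈ Hset b t := hshift ▸ Set.mem_image_of_mem _ hs
  have hsm : (2 : ℤ) ^ t ∣ s + m :=
    (EuclideanDomain.dvd_mod_iff (two_pow_dvd_pp b t)).mp (two_pow_dvd_of_mem_Hset hshifted)
  exact (dvd_add_right (two_pow_dvd_of_mem_Hset hs)).mp hsm

theorem holes_shift_invariant_two_pow (b : ℕ → ℕ)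
    (hodd : ∀ i : ℕ, 1 ≤ i → Odd (b i))
    (hgt : ∀ i : ℕ, 1 ≤ i → 1 < b i)
    (hcop : ∀ i j : ℕ, 1 ≤ i → 1 ≤ j → i ≠ j → Nat.Coprime (b i) (b j))
    (t : ℕ) (ht : 1 ≤ t) (m : ℤ)
    (hshift : (fun s => (s + m) % (pp b t : ℤ)) '' Hset b t = Hset b t) :
    (2 : ℤ) ^ t ∣ m :=
  holes_shift_invariant_two_pow_general b hodd hgt t m hshift
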